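/- arXiv:1903.06477 — 3 statements merged into one kernel-verified Lean document; each statement's English description precedes it below -/
import Mathlib

section
/- If (χ, ψ, τ, ς, κ) solves the homogeneous self-dual embedding with τ > 0 and κ = 0, then the triplet (x, y, s) = (χ/τ, ψ/τ, ς/τ) satisfies the KKT conditions of the cone program: Ax + s = b, s ∈ K, y ∈ K*, Aᵀy + c = 0, and ⟨y, s⟩ = 0. -/
open Matrix

section HomogeneousSelfDualEmbedding

variable {R m n : Type*} [CommRing R] [Fintype m] [Fintype n]
  (A : Matrix m n R) (b : m → R) (c : n → R)

/-- The HSDE operator `Q` is skew-symmetric: `⟨(χ, ψ, τ), Q(χ, ψ, τ)⟩ = 0`. -/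
theorem hsde_inner_self_eq_zero (χ : n → R) (ψ : m → R) (τ : R) :
    χ ⬝ᵥ (Aᵀ *ᵥ ψ + τ • c) + ψ ⬝ᵥ (-(A *ᵥ χ) + τ • b) + τ * (-(c ⬝ᵥ χ) - b ⬝ᵥ ψ) = 0 := by
  have hAψ : χ ⬝ᵥ (Aᵀ *ᵥ ψ) = ψ ⬝ᵥ (A *ᵥ χ) := by
    rw [dotProduct_mulVec, vecMul_transpose, dotProduct_comm]
  simp only [dotProduct_add, dotProduct_neg, dotProduct_smul, smul_eq_mul, hAψ,
    dotProduct_comm χ c, dotProduct_comm ψ b]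
  ring

theorem hsde_dotProduct_add_mul_eq_zero {χ : n → R} {ψ ς : m → R} {τ κ : R}
    (h1 : Aᵀ *ᵥ ψ + τ • c = 0) (h2 : -(A *ᵥ χ) + τ • b = ς)
    (h3 : -(c ⬝ᵥ χ) - b ⬝ᵥ ψ = κ) :
    ψ ⬝ᵥ ς + τ * κ = 0 := by
  simpa [h1, h2, h3] using hsde_inner_self_eq_zero A b c χ ψ τ

end HomogeneousSelfDualEmbedding

theorem hsde_solution_gives_kkt_general {m n : ℕ}
    (A : Matrix (Fin m) (Fin n) ℝ) (b : Fin m → ℝ) (c : Fin n → ℝ)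
    (K : Set (Fin m → ℝ))
    (hcone : ∀ s ∈ K, ∀ r : ℝ, 0 < r → r • s ∈ K)
    (χ : Fin n → ℝ) (ψ : Fin m → ℝ) (τ : ℝ) (ς : Fin m → ℝ) (κ : ℝ)
    (h1 : Aᵀ.mulVec ψ + τ • c = 0)
    (h2 : -(A.mulVec χ) + τ • b = ς)
    (h3 : -(c ⬝ᵥ χ) - b ⬝ᵥ ψ = κ)
    (hς : ς ∈ K) (hψ : ∀ s ∈ K, ψ ⬝ᵥ s ≥ 0) (hτpos : 0 < τ) (hκ : κ = 0)
    (x : Fin n → ℝ) (y : Fin m → ℝ) (s : Fin m → ℝ)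
    (hx : x = τ⁻¹ • χ) (hy : y = τ⁻¹ • ψ) (hs : s = τ⁻¹ • ς) :
    A.mulVec x + s = b ∧ s ∈ K ∧ (∀ s' ∈ K, y ⬝ᵥ s' ≥ 0) ∧
      Aᵀ.mulVec y + c = 0 ∧ y ⬝ᵥ s = 0 := by
  have hτ : τ ≠ 0 := hτpos.ne'
  subst hx hy hs
  refine ⟨?_, hcone ς hς τ⁻¹ (inv_pos.mpr hτpos), fun s' hs' => ?_, ?_, ?_⟩
  · rw [mulVec_smul, ← smul_add, ← h2, add_neg_cancel_left, inv_smul_smul₀ hτ]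
  · rw [smul_dotProduct]
    exact mul_nonneg (inv_nonneg.mpr hτpos.le) (hψ s' hs')
  · rw [mulVec_smul, ← inv_smul_smul₀ hτ c, ← smul_add, h1, smul_zero]
  · have hψς : ψ ⬝ᵥ ς = 0 := by
      simpa [hκ] using hsde_dotProduct_add_mul_eq_zero A b c h1 h2 h3
    rw [smul_dotProduct, dotProduct_smul, hψς, smul_zero, smul_zero]

/-- If `(χ, ψ, τ, ς, κ)` solves the HSDE with `τ > 0` and `κ = 0`,
then `(x, y, s) = (χ/τ, ψ/τ, ς/τ)` satisfies the KKT conditions: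
`Ax + s = b`, `s ∈ K`, `y ∈ K*`, `Aᵀy + c = 0`, `⟨y, s⟩ = 0`. -/
theorem hsde_solution_gives_kkt {m n : ℕ}
    (A : Matrix (Fin m) (Fin n) ℝ) (b : Fin m → ℝ) (c : Fin n → ℝ)
    (K : Set (Fin m → ℝ))
    (hne : K.Nonempty) (hcl : IsClosed K) (hconv : Convex ℝ K)
    (hcone : ∀ s ∈ K, ∀ r : ℝ, 0 < r → r • s ∈ K)
    (χ : Fin n → ℝ) (ψ : Fin m → ℝ) (τ : ℝ) (ς : Fin m → ℝ) (κ : ℝ)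
    (h1 : Aᵀ.mulVec ψ + τ • c = 0)
    (h2 : -(A.mulVec χ) + τ • b = ς)
    (h3 : -(c ⬝ᵥ χ) - b ⬝ᵥ ψ = κ)
    (hς : ς ∈ K) (hψ : ∀ s ∈ K, ψ ⬝ᵥ s ≥ 0) (hτpos : 0 < τ) (hκ : κ = 0)
    (x : Fin n → ℝ) (y : Fin m → ℝ) (s : Fin m → ℝ)
    (hx : x = τ⁻¹ • χ) (hy : y = τ⁻¹ • ψ) (hs : s = τ⁻¹ • ς) :
    A.mulVec x + s = b ∧ s ∈ K ∧ (∀ s' ∈ K, y ⬝ᵥ s' ≥ 0) ∧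
      Aᵀ.mulVec y + c = 0 ∧ y ⬝ᵥ s = 0 :=
  hsde_solution_gives_kkt_general A b c K hcone χ ψ τ ς κ h1 h2 h3 hς hψ hτpos hκ x y s hx hy hs
end

section
/- The Douglas–Rachford operator of SuperSCS is firmly nonexpansive: let Q : ℝ^N → ℝ^N be a skew-symmetric linear map, C ⊆ ℝ^N a nonempty closed convex set, P = (I + Q)^{-1}, and define T(u) = u + Π_C(2Pu − u) − Pu. Then for all u, v ∈ ℝ^N, ⟨Tu − Tv, u − v⟩ ≥ ‖Tu − Tv‖². -/
/-!
`T` is the Douglas–Rachford operator `u ↦ u + B (2 A u - u) - A u` built from the resolvent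
`A = (I + Q)⁻¹` of the monotone linear map `Q` and the projection `B = Π_C`, both of which are
firmly nonexpansive. Writing `p = A u - A v`, `d = B x - B y` for `x = 2 A u - u`, `y = 2 A v - v`,
and `w = u - v`, so that `x - y = 2p - w`, one has the identity
`⟪w + d - p, w⟫ - ‖w + d - p‖² = (⟪d, x - y⟫ - ‖d‖²) + (⟪p, w⟫ - ‖p‖²)`,
and both brackets are nonnegative by firm nonexpansiveness of `B` and of `A`.
-/

open scoped RealInnerProductSpace

variable {E : Type*} [NormedAddCommGroup E] [InnerProductSpace ℝ E]

def FirmlyNonexpansive (T : E → E) : Prop :=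
  ∀ u v, ‖T u - T v‖ ^ 2 ≤ ⟪T u - T v, u - v⟫

lemma inner_apply_self_eq_zero_of_skew {Q : E →ₗ[ℝ] E}
    (hskew : ∀ u v, ⟪Q u, v⟫ = -⟪u, Q v⟫) (w : E) : ⟪Q w, w⟫ = 0 := by
  have h := hskew w w
  rw [real_inner_comm (Q w) w] at h
  linarith

lemma firmlyNonexpansive_of_apply_add_map_apply_eq {Q : E →ₗ[ℝ] E}
    (hmono : ∀ w, 0 ≤ ⟪Q w, w⟫) {P : E → E} (hP : ∀ u, P u + Q (P u) = u) :
    FirmlyNonexpansive P := by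
  intro u v
  have huv : u - v = (P u - P v) + Q (P u - P v) := by
    rw [map_sub]
    conv_lhs => rw [← hP u, ← hP v]
    abel
  rw [huv, inner_add_right, ← real_inner_self_eq_norm_sq,
    real_inner_comm (Q (P u - P v)) (P u - P v)]
  linarith [hmono (P u - P v)]

lemma firmlyNonexpansive_of_inner_sub_le_zero {C : Set E} {proj : E → E}
    (hprojC : ∀ x, proj x ∈ C)
    (hproj : ∀ x, ∀ v ∈ C, ⟪x - proj x, v - proj x⟫ ≤ 0) :
    FirmlyNonexpansive proj := by
  intro x y
  have hx := hproj x (proj y) (hprojC y)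
  have hy := hproj y (proj x) (hprojC x)
  rw [← real_inner_self_eq_norm_sq]
  have hsplit : ⟪proj x - proj y, x - y⟫ - ⟪proj x - proj y, proj x - proj y⟫
      = -⟪x - proj x, proj y - proj x⟫ - ⟪y - proj y, proj x - proj y⟫ := by
    simp only [inner_sub_left, inner_sub_right, real_inner_comm x, real_inner_comm y,
      real_inner_comm (proj x) (proj y)]
    ring
  linarith

lemma inner_douglasRachford_sub_sub_norm_sq (w d p : E) :
    ⟪w + d - p, w⟫ - ‖w + d - p‖ ^ 2
      = (⟪d, 2 • p - w⟫ - ‖d‖ ^ 2) + (⟪p, w⟫ - ‖p‖ ^ 2) := by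
  simp only [← real_inner_self_eq_norm_sq, two_nsmul, inner_sub_left, inner_sub_right,
    inner_add_left, inner_add_right, real_inner_comm w, real_inner_comm d p]
  ring

lemma FirmlyNonexpansive.douglasRachford {A B : E → E} (hA : FirmlyNonexpansive A)
    (hB : FirmlyNonexpansive B) : FirmlyNonexpansive fun u ↦ u + B (2 • A u - u) - A u := by
  intro u v
  have hxy : (2 • A u - u) - (2 • A v - v) = 2 • (A u - A v) - (u - v) := by
    simp only [smul_sub]
    abel
  have hB' := hB (2 • A u - u) (2 • A v - v)
  rw [hxy] at hB'
  have key := inner_douglasRachford_sub_sub_norm_sq (u - v)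
    (B (2 • A u - u) - B (2 • A v - v)) (A u - A v)
  have hT : u + B (2 • A u - u) - A u - (v + B (2 • A v - v) - A v)
      = u - v + (B (2 • A u - u) - B (2 • A v - v)) - (A u - A v) := by abel
  rw [hT]
  linarith [hA u v]

theorem superscs_dr_operator_firmly_nonexpansive_general {N : ℕ}
    (Q : EuclideanSpace ℝ (Fin N) →ₗ[ℝ] EuclideanSpace ℝ (Fin N))
    (hskew : ∀ u v, ⟪Q u, v⟫ = -⟪u, Q v⟫)
    (C : Set (EuclideanSpace ℝ (Fin N)))
    (P : EuclideanSpace ℝ (Fin N) → EuclideanSpace ℝ (Fin N))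
    (hPright : ∀ u, P u + Q (P u) = u)
    (proj : EuclideanSpace ℝ (Fin N) → EuclideanSpace ℝ (Fin N))
    (hprojC : ∀ x, proj x ∈ C)
    (hproj : ∀ x, ∀ v ∈ C, ⟪x - proj x, v - proj x⟫ ≤ 0)
    (T : EuclideanSpace ℝ (Fin N) → EuclideanSpace ℝ (Fin N))
    (hT : ∀ u, T u = u + proj (2 • P u - u) - P u) :
    ∀ u v, ⟪T u - T v, u - v⟫ ≥ ‖T u - T v‖ ^ 2 := by
  have hP : FirmlyNonexpansive P := firmlyNonexpansive_of_apply_add_map_apply_eq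
    (fun w ↦ (inner_apply_self_eq_zero_of_skew hskew w).ge) hPright
  have hproj' : FirmlyNonexpansive proj := firmlyNonexpansive_of_inner_sub_le_zero hprojC hproj
  have hTeq : T = fun u ↦ u + proj (2 • P u - u) - P u := funext hT
  subst hTeq
  exact hP.douglasRachford hproj'

/-- The Douglas–Rachford operator of SuperSCS is firmly nonexpansive:
with `Q` skew-symmetric linear, `C` nonempty closed convex, `P = (I + Q)⁻¹`,
`Π_C` the Euclidean projection onto `C`, and `T u = u + Π_C(2Pu − u) − Pu`,
one has `⟪Tu − Tv, u − v⟫ ≥ ‖Tu − Tv‖²` for all `u, v`. -/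
theorem superscs_dr_operator_firmly_nonexpansive {N : ℕ}
    (Q : EuclideanSpace ℝ (Fin N) →ₗ[ℝ] EuclideanSpace ℝ (Fin N))
    (hskew : ∀ u v, ⟪Q u, v⟫ = -⟪u, Q v⟫)
    (C : Set (EuclideanSpace ℝ (Fin N)))
    (hne : C.Nonempty) (hcl : IsClosed C) (hconv : Convex ℝ C)
    (P : EuclideanSpace ℝ (Fin N) → EuclideanSpace ℝ (Fin N))
    (hPright : ∀ u, P u + Q (P u) = u)
    (hPleft : ∀ u, P (u + Q u) = u)
    (proj : EuclideanSpace ℝ (Fin N) → EuclideanSpace ℝ (Fin N))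
    (hprojC : ∀ x, proj x ∈ C)
    (hproj : ∀ x, ∀ v ∈ C, ⟪x - proj x, v - proj x⟫ ≤ 0)
    (T : EuclideanSpace ℝ (Fin N) → EuclideanSpace ℝ (Fin N))
    (hT : ∀ u, T u = u + proj (2 • P u - u) - P u) :
    ∀ u v, ⟪T u - T v, u - v⟫ ≥ ‖T u - T v‖ ^ 2 :=
  superscs_dr_operator_firmly_nonexpansive_general Q hskew C P hPright proj hprojC hproj T hT
end

section
/- Powell's modification guarantees a uniformly nonzero update coefficient: let θ̄ ∈ (0,1) and γ ∈ ℝ, and define θ = 1 if |γ| ≥ θ̄, and θ = (1 − sgn(γ)·θ̄)/(1 − γ) otherwise, with the convention sgn(0) = 1. Then |(1 − θ) + θγ| ≥ θ̄. -/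
/-! Below the threshold, `θ` is chosen exactly so that the combination
`(1 - θ) + θ γ = 1 - θ (1 - γ)` equals `± θ̄`; above it, the combination is `γ` itself. -/

theorem one_sub_add_mul_eq_of_eq_div {c γ θ : ℝ} (hγ : γ ≠ 1)
    (hθ : θ = (1 - c) / (1 - γ)) : (1 - θ) + θ * γ = c := by
  have : (1 : ℝ) - γ ≠ 0 := sub_ne_zero.mpr hγ.symm
  rw [hθ]
  field_simp
  ring

theorem abs_ite_neg_one_one_mul (p : Prop) [Decidable p] (x : ℝ) :
    |(if p then (-1 : ℝ) else 1) * x| = |x| := by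
  split_ifs <;> simp

theorem powell_trick_coefficient_bound_general (θbar γ : ℝ)
    (hθbar1 : θbar < 1)
    (θ : ℝ)
    (hθ : θ = if θbar ≤ |γ| then 1
          else (1 - (if γ < 0 then (-1 : ℝ) else 1) * θbar) / (1 - γ)) :
    θbar ≤ |(1 - θ) + θ * γ| := by
  by_cases hbig : θbar ≤ |γ|
  · simp [hθ, hbig]
  · have hγ : γ ≠ 1 := fun h => hbig (by simpa [h] using hθbar1.le)
    rw [if_neg hbig] at hθ
    rw [one_sub_add_mul_eq_of_eq_div hγ hθ, abs_ite_neg_one_one_mul]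
    exact le_abs_self θbar

/-- Powell's modification guarantees a uniformly nonzero update
coefficient: for `θ̄ ∈ (0,1)` and `γ ∈ ℝ`, with `θ = 1` if `|γ| ≥ θ̄` and
`θ = (1 − sgn(γ)·θ̄)/(1 − γ)` otherwise (convention `sgn(0) = 1`), one has
`|(1 − θ) + θγ| ≥ θ̄`. -/
theorem powell_trick_coefficient_bound (θbar γ : ℝ)
    (hθbar0 : 0 < θbar) (hθbar1 : θbar < 1)
    (θ : ℝ)
    (hθ : θ = if θbar ≤ |γ| then 1
          else (1 - (if γ < 0 then (-1 : ℝ) else 1) * θbar) / (1 - γ)) :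
    θbar ≤ |(1 - θ) + θ * γ| :=
  powell_trick_coefficient_bound_general θbar γ hθbar1 θ hθ
end
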